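/- Let T be an n-consistent theory in a countable language with at most ℵ₀ isomorphism classes of n-generated models. Then every n-generated model of T has an ordinal rank (i.e., rk(M) ≠ ∞). -/

import Mathlib

open FirstOrder FirstOrder.Language Cardinal

namespace Paper

variable (L : FirstOrder.Language.{0, 0})

/-- A tuple `a` generates `M`: every element is the value of a term at `a`. -/
def Generates {M : Type*} [L.Structure M] {n : ℕ} (a : Fin n → M) : Prop :=
  ∀ y : M, ∃ t : L.Term (Fin n), t.realize a = y

/-- A type over the language `L(c₁,…,cₙ)` in `k` free variables, represented as a set of
`L`-formulas in variables `Fin n ⊕ Fin k` (the first block playing the role of the constants). -/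
def NType (n : ℕ) : Type := Σ k : ℕ, Set (L.Formula (Fin n ⊕ Fin k))

variable {L}

/-- The pair `(M, a)` realizes the type `p` (in the language with the constants interpreted
as `a`). -/
def RealizesNType {M : Type*} [L.Structure M] {n : ℕ} (a : Fin n → M) (p : NType L n) : Prop :=
  ∃ v : Fin p.1 → M, ∀ φ ∈ p.2, φ.Realize (Sum.elim a v)

variable (L) in
/-- The type `pₙ(y) = { y ≠ τ(c̄) | τ an L-term }`. -/
def pType (n : ℕ) : NType L n :=
  ⟨1, { φ | ∃ t : L.Term (Fin n),
    φ = (Term.equal (t.relabel Sum.inl) (Term.var (Sum.inr 0))).not }⟩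

/-- The complete type `p_ā(M)` of a tuple, viewed as a set of sentences of `L(c̄)`. -/
def ctype {M : Type*} [L.Structure M] {n : ℕ} (a : Fin n → M) : NType L n :=
  ⟨0, { φ | ∃ ψ : L.Formula (Fin n), ψ.Realize a ∧ φ = ψ.relabel Sum.inl }⟩

/-- A type (in the language with constants) is supported over a class `K` of models-with-tuples
if some formula, satisfiable in `K`, forces realization of the type throughout `K`. -/
def Supported {T : L.Theory} {n : ℕ} (K : Set (Σ M : Theory.ModelType.{0, 0, 0} T, Fin n → M))
    (p : NType L n) : Prop :=
  ∃ φ : L.Formula (Fin n ⊕ Fin p.1),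
    (∃ P ∈ K, ∃ v : Fin p.1 → P.1, φ.Realize (Sum.elim P.2 v)) ∧
    ∀ P ∈ K, ∀ v : Fin p.1 → P.1, φ.Realize (Sum.elim P.2 v) →
      ∀ ψ ∈ p.2, ψ.Realize (Sum.elim P.2 v)

/-- `rk`: `RankEq T n α M` means the `n`-rank of `M` is `α`. Defined by transfinite
recursion: the rank is `α ≥ 1` iff for every generating `n`-tuple `ā`, `p_ā(M)` is
supported over the class of models (with generating tuple) of `T` omitting `pₙ` and the
complete types of all models of smaller rank. -/
def RankEq (T : L.Theory) (n : ℕ) : Ordinal.{0} → Theory.ModelType.{0, 0, 0} T → Prop :=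
  Ordinal.lt_wf.fix fun α ih M =>
    1 ≤ α ∧ (∃ a : Fin n → M, Generates L a) ∧
      ∀ a : Fin n → M, Generates L a →
        Supported
          { P : Σ N : T.ModelType, Fin n → N |
            ¬ RealizesNType (L := L) P.2 (pType L n) ∧
            ∀ β : Ordinal, (h : β < α) → ∀ N : T.ModelType, ih β h N →
              ∀ b : Fin n → N, Generates L b → ¬ RealizesNType (L := L) P.2 (ctype (L := L) b) }
          (ctype a)

/-- The class `K(T|P_{n,α})`: models of `T` with a distinguished `n`-tuple, omitting `pₙ`
(equivalently, generated by the tuple) and omitting the complete type of every `n`-generated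
model of `T` of rank `< α`. -/
def Kclass (T : L.Theory) (n : ℕ) (α : Ordinal.{0}) :
    Set (Σ M : Theory.ModelType.{0, 0, 0} T, Fin n → M) :=
  { P | ¬ RealizesNType (L := L) P.2 (pType L n) ∧
    ∀ β : Ordinal, β < α → ∀ N : T.ModelType, RankEq T n β N →
      ∀ b : Fin n → N, Generates L b → ¬ RealizesNType (L := L) P.2 (ctype (L := L) b) }

variable (L) in
/-- `n`-generated models of `T` (with countable carrier). -/
abbrev NGenModel (T : L.Theory) (n : ℕ) : Type 1 :=
  { M : Theory.ModelType.{0, 0, 0} T // ∃ a : Fin n → M, Generates L a }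

instance isoSetoid {T : L.Theory} {n : ℕ} : Setoid (NGenModel L T n) where
  r M N := Nonempty (M.1 ≃[L] N.1)
  iseqv := ⟨fun M => ⟨FirstOrder.Language.Equiv.refl L M.1⟩, fun ⟨e⟩ => ⟨e.symm⟩, fun ⟨e⟩ ⟨f⟩ => ⟨FirstOrder.Language.Equiv.comp f e⟩⟩

variable (L) in
/-- `α_n(T)`: the number of isomorphism classes of `n`-generated models of `T`. -/
def alphaCard (T : L.Theory) (n : ℕ) : Cardinal.{1} :=
  Cardinal.mk (Quotient (isoSetoid (L := L) (T := T) (n := n)))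

variable (L) in
/-- `T` is `n`-consistent: it has an `n`-generated model. -/
def NConsistent (T : L.Theory) (n : ℕ) : Prop :=
  ∃ M : Theory.ModelType.{0, 0, 0} T, ∃ a : Fin n → M, Generates L a


/-! ### Universal / existential formulas, ∀∃ theories -/

variable (L) in
/-- A universal formula: universal quantifiers over a quantifier-free formula. -/
def IsUniversalFormula {α : Type} (φ : L.Formula α) : Prop :=
  ∃ (k : ℕ) (ψ : L.BoundedFormula α k), ψ.IsQF ∧ φ = ψ.alls

variable (L) in
/-- An existential formula: existential quantifiers over a quantifier-free formula. -/
def IsExistentialFormula {α : Type} (φ : L.Formula α) : Prop :=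
  ∃ (k : ℕ) (ψ : L.BoundedFormula α k), ψ.IsQF ∧ φ = ψ.exs

/-- Iterated existential quantification of the last `k` bounded variables. -/
def exsTo {α : Type} : ∀ {m k : ℕ}, L.BoundedFormula α (m + k) → L.BoundedFormula α m
  | _, 0, φ => φ
  | _, _ + 1, φ => exsTo φ.ex

variable (L) in
/-- A `∀∃`-sentence: `∀ x̄ ∃ ȳ ψ` with `ψ` quantifier-free. -/
def IsAESentence (σ : L.Sentence) : Prop :=
  ∃ (m k : ℕ) (ψ : L.BoundedFormula Empty (m + k)), ψ.IsQF ∧ σ = (exsTo ψ).alls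

variable (L) in
/-- A `∀∃`-theory. -/
def IsAETheory (T : L.Theory) : Prop := ∀ σ ∈ T, IsAESentence L σ

/-- The universal type `p_{ā,∀}(M)` of a tuple: universal sentences of `L(c̄)` true of `ā`. -/
def utype {M : Type*} [L.Structure M] {n : ℕ} (a : Fin n → M) : NType L n :=
  ⟨0, { φ | ∃ ψ : L.Formula (Fin n),
    IsUniversalFormula L ψ ∧ ψ.Realize a ∧ φ = ψ.relabel Sum.inl }⟩

/-- A universal type is existentially supported over a class `K` if some existential formula,
satisfiable in `K`, forces its realization throughout `K`. -/
def ESupported {T : L.Theory} {n : ℕ} (K : Set (Σ M : Theory.ModelType.{0, 0, 0} T, Fin n → M))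
    (p : NType L n) : Prop :=
  ∃ φ : L.Formula (Fin n ⊕ Fin p.1), IsExistentialFormula L φ ∧
    (∃ P ∈ K, ∃ v : Fin p.1 → P.1, φ.Realize (Sum.elim P.2 v)) ∧
    ∀ P ∈ K, ∀ v : Fin p.1 → P.1, φ.Realize (Sum.elim P.2 v) →
      ∀ ψ ∈ p.2, ψ.Realize (Sum.elim P.2 v)

/-- `Rk`: the rank defined from universal types and existential supports. -/
def URankEq (T : L.Theory) (n : ℕ) : Ordinal.{0} → Theory.ModelType.{0, 0, 0} T → Prop :=
  Ordinal.lt_wf.fix fun α ih M =>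
    1 ≤ α ∧ (∃ a : Fin n → M, Generates L a) ∧
      ∀ a : Fin n → M, Generates L a →
        ESupported
          { P : Σ N : Theory.ModelType.{0, 0, 0} T, Fin n → N |
            ¬ RealizesNType (L := L) P.2 (pType L n) ∧
            ∀ β : Ordinal, (h : β < α) → ∀ N : Theory.ModelType.{0, 0, 0} T, ih β h N →
              ∀ b : Fin n → N, Generates L b → ¬ RealizesNType (L := L) P.2 (utype b) }
          (utype a)

/-- The class `K(T|Q_{n,α})` of the universal rank. -/
def UKclass (T : L.Theory) (n : ℕ) (α : Ordinal.{0}) :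
    Set (Σ M : Theory.ModelType.{0, 0, 0} T, Fin n → M) :=
  { P | ¬ RealizesNType (L := L) P.2 (pType L n) ∧
    ∀ β : Ordinal, β < α → ∀ N : Theory.ModelType.{0, 0, 0} T, URankEq T n β N →
      ∀ b : Fin n → N, Generates L b → ¬ RealizesNType (L := L) P.2 (utype b) }

/-! ### Types in finitely many variables, classes of models, omitting types -/

variable (L) in
/-- A type in finitely many variables. -/
def MType : Type := Σ k : ℕ, Set (L.Formula (Fin k))

variable (L) in
/-- A type all of whose formulas are universal. -/
def IsUniversalMType (p : MType L) : Prop := ∀ φ ∈ p.2, IsUniversalFormula L φ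

/-- A model realizes a type if some tuple satisfies all of its formulas. -/
def MRealizes {T : L.Theory} (M : Theory.ModelType.{0, 0, 0} T) (p : MType L) : Prop :=
  ∃ v : Fin p.1 → M, ∀ φ ∈ p.2, φ.Realize v

/-- The class `K(T|P)` of models of `T` omitting every type in `P`. -/
def KTP (T : L.Theory) (P : Set (MType L)) : Set (Theory.ModelType.{0, 0, 0} T) :=
  { M | ∀ p ∈ P, ¬ MRealizes M p }

/-- A type is supported over a class `K` of models of `T`. -/
def MSupported {T : L.Theory} (K : Set (Theory.ModelType.{0, 0, 0} T)) (q : MType L) : Prop :=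
  ∃ φ : L.Formula (Fin q.1),
    (∃ M ∈ K, ∃ v : Fin q.1 → M, φ.Realize v) ∧
    ∀ M ∈ K, ∀ v : Fin q.1 → M, φ.Realize v → ∀ ψ ∈ q.2, ψ.Realize v

/-- A universal type is existentially supported over a class `K` of models of `T`. -/
def MESupported {T : L.Theory} (K : Set (Theory.ModelType.{0, 0, 0} T)) (q : MType L) : Prop :=
  ∃ φ : L.Formula (Fin q.1), IsExistentialFormula L φ ∧
    (∃ M ∈ K, ∃ v : Fin q.1 → M, φ.Realize v) ∧
    ∀ M ∈ K, ∀ v : Fin q.1 → M, φ.Realize v → ∀ ψ ∈ q.2, ψ.Realize v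


/-! ### Groups -/

/-- The function symbols of the language of groups. -/
inductive GroupFunc : ℕ → Type
  | mul : GroupFunc 2
  | inv : GroupFunc 1
  | one : GroupFunc 0

/-- The first-order language of groups. -/
def grpLang : FirstOrder.Language.{0, 0} := ⟨GroupFunc, fun _ => Empty⟩

/-- Any group is a `grpLang`-structure. -/
instance grpStructure (G : Type*) [Group G] : grpLang.Structure G where
  funMap {n} f v :=
    match f with
    | .mul => v 0 * v 1
    | .inv => (v 0)⁻¹
    | .one => 1
  RelMap {n} r := r.elim

/-- The universal theory `Th_∀(H)` of a group `H`. -/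
def uTheoryOf (H : Type*) [Group H] : grpLang.Theory :=
  { σ | IsUniversalFormula grpLang σ ∧ H ⊨ σ }

/-- The algebraic set `V(S)` defined by a set `S ⊆ H ∗ F(x₁,…,xₙ)` of equations. -/
def Vset {H : Type} [Group H] {n : ℕ} (S : Set (Monoid.Coprod H (FreeGroup (Fin n)))) :
    Set (Fin n → H) :=
  { g | ∀ s ∈ S, Monoid.Coprod.lift (MonoidHom.id H) (FreeGroup.lift g) s = 1 }

/-- A group `H` is equationally noetherian if every algebraic set over `H` is defined by a
finite subsystem. -/
def EquationallyNoetherian (H : Type) [Group H] : Prop :=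
  ∀ (n : ℕ) (S : Set (Monoid.Coprod H (FreeGroup (Fin n)))),
    ∃ S₀ ⊆ S, S₀.Finite ∧ Vset S = Vset S₀

/-- Bundled finitely generated `H`-limit groups (with countable-universe carrier):
finitely generated groups satisfying the universal theory of `H`. -/
def LimitGroup (H : Type) [Group H] : Type 1 :=
  { G : GrpCat.{0} // Group.FG G ∧ (G : Type) ⊨ uTheoryOf H }

instance limitGroupSetoid {H : Type} [Group H] : Setoid (LimitGroup H) where
  r A B := Nonempty ((A.1 : Type) ≃* (B.1 : Type))
  iseqv := ⟨fun A => ⟨MulEquiv.refl _⟩, fun ⟨e⟩ => ⟨e.symm⟩, fun ⟨e⟩ ⟨f⟩ => ⟨e.trans f⟩⟩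

/-- `GRank H G γ` : the group `G`, as a model of `Th_∀(H)`, has universal rank `Rk(G) = γ`
(with respect to some tuple-length). -/
def GRank (H : Type) [Group H] (G : Type) [Group G] (hmod : G ⊨ uTheoryOf H)
    (γ : Ordinal.{0}) : Prop :=
  ∃ n : ℕ, URankEq (uTheoryOf H) n γ
    (@Theory.ModelType.of grpLang (uTheoryOf H) G _ hmod One.instNonempty)

/-- `G` is `H`-determined: some finite set `X ⊆ G \ {1}` is such that every homomorphism
from `G` to an `H`-limit group killing no element of `X` is injective. -/
def HDetermined (H : Type) [Group H] (G : Type) [Group G] : Prop :=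
  ∃ X : Finset G, (1 : G) ∉ X ∧
    ∀ (L' : Type) [Group L'], Group.FG L' → (L' ⊨ uTheoryOf H) →
      ∀ f : G →* L', (∀ x ∈ X, f x ≠ 1) → Function.Injective f

end Paper

/-!
Isomorphic models have the same rank and a model has at most one rank, so with countably many
`n`-generated models up to isomorphism the attained ranks are bounded by some `λ`. The class
`K(T|P_{n,λ})` consists of the generated pairs whose model has no rank, and over it the complete
type of no generating tuple `q̄` of a model `Q` is supported: if `Q` has a rank, a pair of the class
realizing that type would be a copy of `Q`; if not, `Q` fails to have rank `λ`, so the type of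
some generating tuple of `Q` is unsupported, and support passes between generating tuples of the
same model. A model without rank makes the class nonempty, and the omitting types theorem (a
Henkin construction inside the class, followed by Tarski–Vaught for the substructure generated by
the constants) then gives an `n`-generated model omitting the countably many complete types of
generating tuples, although it realizes its own.
-/

theorem FirstOrder.Language.Formula.realize_subst {L : FirstOrder.Language} {α β : Type*}
    {M : Type*} [L.Structure M] (φ : L.Formula α) (t : α → L.Term β) (v : β → M) :
    Formula.Realize (φ.subst t) v ↔ φ.Realize fun a => (t a).realize v :=
  BoundedFormula.realize_subst

theorem exists_seq_of_forall_insert {β : Type*} [DecidableEq β] (Good : Finset β → Prop)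
    (Spec : ℕ → β → Prop) (h0 : Good ∅)
    (hstep : ∀ k s, Good s → ∃ x, Good (insert x s) ∧ Spec k x) :
    ∃ x : ℕ → β, (∀ k, Spec k (x k)) ∧ ∀ m, Good ((Finset.range m).image x) := by
  choose next hnext using hstep
  let F : ℕ → {s // Good s} := fun k => Nat.rec ⟨∅, h0⟩
    (fun k s => ⟨insert (next k s.1 s.2) s.1, (hnext k s.1 s.2).1⟩) k
  let x k := next k (F k).1 (F k).2
  have hF (m : ℕ) : (F m).1 = (Finset.range m).image x := by
    induction m with
    | zero => rfl
    | succ m ih => rw [Finset.range_add_one, Finset.image_insert, ← ih]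
  exact ⟨x, fun k => (hnext k _ _).2, fun m => hF m ▸ (F m).2⟩

namespace Paper

variable {L : FirstOrder.Language.{0, 0}} {T : L.Theory} {n : ℕ}

section Tuples

variable {M N : Type*} [L.Structure M] [L.Structure N]

variable (L) in
def tupleTheory (a : Fin n → M) : Set (L.Formula (Fin n)) :=
  {ψ | ψ.Realize a}

@[simp]
theorem mem_tupleTheory {a : Fin n → M} {ψ : L.Formula (Fin n)} :
    ψ ∈ tupleTheory L a ↔ ψ.Realize a :=
  Iff.rfl

theorem tupleTheory_eq_of_subset {a : Fin n → M} {b : Fin n → N}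
    (h : tupleTheory L a ⊆ tupleTheory L b) : tupleTheory L a = tupleTheory L b :=
  h.antisymm fun _ hψ => by_contra fun hna => h (Formula.realize_not.2 hna) hψ

theorem tupleTheory_equiv_comp (g : M ≃[L] N) (a : Fin n → M) :
    tupleTheory L (g ∘ a) = tupleTheory L a :=
  Set.ext fun ψ => StrongHomClass.realize_formula g ψ

theorem tupleTheory_realize_terms (a : Fin n → M) (t : Fin n → L.Term (Fin n)) :
    tupleTheory L (fun i => (t i).realize a) = (fun ψ => ψ.subst t) ⁻¹' tupleTheory L a :=
  Set.ext fun ψ => (Formula.realize_subst ψ t a).symm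

theorem realize_relabel_inl {k : ℕ} (ψ : L.Formula (Fin n)) (a : Fin n → M) (v : Fin k → M) :
    (ψ.relabel Sum.inl : L.Formula (Fin n ⊕ Fin k)).Realize (Sum.elim a v) ↔ ψ.Realize a := by
  rw [Formula.realize_relabel, Sum.elim_comp_inl]

theorem realize_eq_of_tupleTheory_subset {a : Fin n → M} {b : Fin n → N}
    (h : tupleTheory L a ⊆ tupleTheory L b) {t u : L.Term (Fin n)}
    (htu : t.realize a = u.realize a) : t.realize b = u.realize b := by
  simpa [Formula.realize_equal] using h (show t.equal u ∈ tupleTheory L a by simpa using htu)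

theorem realizesNType_ctype_iff (a : Fin n → M) (b : Fin n → N) :
    RealizesNType b (ctype (L := L) a) ↔ tupleTheory L a ⊆ tupleTheory L b := by
  constructor
  · rintro ⟨v, hv⟩ ψ hψ
    exact (realize_relabel_inl ψ b v).1 (hv _ ⟨ψ, hψ, rfl⟩)
  · rintro h
    refine ⟨Fin.elim0, ?_⟩
    rintro _ ⟨ψ, hψ, rfl⟩
    exact (realize_relabel_inl ψ b Fin.elim0).2 (h hψ)

theorem ctype_eq_of_tupleTheory_eq {a : Fin n → M} {b : Fin n → N}
    (h : tupleTheory L a = tupleTheory L b) : ctype (L := L) a = ctype b := by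
  simp only [ctype]
  congr 2 with φ
  exact exists_congr fun ψ => and_congr_left' (Set.ext_iff.1 h ψ)

theorem realizesNType_pType_iff (a : Fin n → M) :
    RealizesNType a (pType L n) ↔ ¬ Generates L a := by
  simp only [RealizesNType, pType, Generates]
  constructor
  · rintro ⟨v, hv⟩ hgen
    obtain ⟨t, ht⟩ := hgen (v 0)
    simpa [Term.realize_relabel, Sum.elim_comp_inl, ht] using hv _ ⟨t, rfl⟩
  · intro h
    push Not at h
    obtain ⟨y, hy⟩ := h
    refine ⟨fun _ => y, ?_⟩
    rintro _ ⟨t, rfl⟩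
    simpa [Term.realize_relabel, Sum.elim_comp_inl] using hy t

theorem generates_of_realize_terms {a b : Fin n → M} (ha : Generates L a)
    (t : Fin n → L.Term (Fin n)) (h : ∀ i, (t i).realize b = a i) : Generates L b := by
  intro y
  obtain ⟨u, rfl⟩ := ha y
  refine ⟨u.subst t, ?_⟩
  simp [Term.realize_subst, h]

theorem generates_equiv_comp (g : M ≃[L] N) {a : Fin n → M} (ha : Generates L a) :
    Generates L (g ∘ a) := by
  intro y
  obtain ⟨t, ht⟩ := ha (g.symm y)
  exact ⟨t, by rw [HomClass.realize_term g, ht, g.apply_symm_apply]⟩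

theorem nonempty_equiv_of_generates {a : Fin n → M} {b : Fin n → N} (ha : Generates L a)
    (hb : Generates L b) (hab : tupleTheory L a ⊆ tupleTheory L b) : Nonempty (M ≃[L] N) := by
  have hth := Set.ext_iff.1 (tupleTheory_eq_of_subset hab)
  choose τ hτ using ha
  let f : M → N := fun y => (τ y).realize b
  have hf : ∀ t : L.Term (Fin n), f (t.realize a) = t.realize b := fun t => by
    simpa [Formula.realize_equal, hτ] using hth ((τ (t.realize a)).equal t)
  have hinj : f.Injective := fun y y' hyy' => by
    simpa [Formula.realize_equal, hτ] using (hth ((τ y).equal (τ y'))).2 (by simpa using hyy')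
  have hsurj : f.Surjective := fun z => by
    obtain ⟨t, rfl⟩ := hb z
    exact ⟨t.realize a, hf t⟩
  refine ⟨⟨Equiv.ofBijective f ⟨hinj, hsurj⟩, fun F x => ?_, fun R x => ?_⟩⟩
  · have := hf (Term.func F fun i => τ (x i))
    simp only [Term.realize_func, hτ] at this
    exact this
  · have := hth (R.formula fun i => τ (x i))
    simp only [mem_tupleTheory, Formula.realize_rel, hτ] at this
    exact this.symm

theorem mem_closure_range_iff {a : Fin n → M} {y : M} :
    y ∈ Substructure.closure L (Set.range a) ↔ ∃ t : L.Term (Fin n), t.realize a = y := by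
  constructor
  · rw [Substructure.mem_closure_iff_exists_term]
    rintro ⟨t, rfl⟩
    refine ⟨t.relabel fun z => z.2.choose, ?_⟩
    rw [Term.realize_relabel]
    exact congrArg t.realize (funext fun z => z.2.choose_spec)
  · rintro ⟨t, rfl⟩
    exact t.realize_mem _ fun i => Substructure.subset_closure (Set.mem_range_self i)

theorem realize_subst_sum_elim_var {α β : Type*} (χ : L.Formula (α ⊕ β)) (u : β → L.Term α)
    (a : α → M) :
    Formula.Realize (χ.subst (Sum.elim Term.var u)) a ↔
      χ.Realize (Sum.elim a fun j => (u j).realize a) := by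
  rw [Formula.realize_subst]
  exact iff_of_eq (congrArg _ (funext fun x => by cases x <;> rfl))

variable (L) in
def HasTermWitnesses (a : Fin n → M) : Prop :=
  ∀ χ : L.Formula (Fin n ⊕ Fin 1), (∃ y : Fin 1 → M, χ.Realize (Sum.elim a y)) →
    ∃ u : Fin 1 → L.Term (Fin n), χ.Realize (Sum.elim a fun j => (u j).realize a)

theorem isElementary_closure_range {a : Fin n → M} (ha : HasTermWitnesses L a) :
    (Substructure.closure L (Set.range a)).IsElementary := by
  refine Substructure.isElementary_of_exists _ fun m φ x y hy => ?_
  choose u hu using fun i => mem_closure_range_iff.1 (x i).2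
  let χ : L.Formula (Fin n ⊕ Fin 1) := φ.toFormula.subst
    (Sum.elim Empty.elim (Fin.snoc (fun j => (u j).relabel Sum.inl) (Term.var (Sum.inr 0))))
  have hχ (z : Fin 1 → M) :
      χ.Realize (Sum.elim a z) ↔ φ.Realize default (Fin.snoc (Subtype.val ∘ x) (z 0)) := by
    rw [Formula.realize_subst, BoundedFormula.realize_toFormula]
    refine iff_of_eq (congrArg₂ _ (funext fun e => e.elim) (funext fun j => ?_))
    refine Fin.lastCases ?_ (fun j => ?_) j
    · simp
    · simp [Term.realize_relabel, hu]
  obtain ⟨w, hw⟩ := ha χ ⟨fun _ => y, (hχ _).2 hy⟩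
  exact ⟨⟨(w 0).realize a, mem_closure_range_iff.2 ⟨_, rfl⟩⟩, (hχ _).1 hw⟩

end Tuples

section Rank

variable {M N : Theory.ModelType.{0, 0, 0} T} {γ γ' lam : Ordinal.{0}}

theorem rankEq_iff :
    RankEq T n γ M ↔ 1 ≤ γ ∧ (∃ a : Fin n → M, Generates L a) ∧
      ∀ a : Fin n → M, Generates L a → Supported (Kclass T n γ) (ctype a) := by
  rw [RankEq, WellFounded.fix_eq]
  rfl

theorem RankEq.exists_generates (h : RankEq T n γ M) : ∃ a : Fin n → M, Generates L a :=
  (rankEq_iff.1 h).2.1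

theorem RankEq.of_equiv (g : M ≃[L] N) (h : RankEq T n γ M) : RankEq T n γ N := by
  obtain ⟨hγ, ⟨a, ha⟩, hsupp⟩ := rankEq_iff.1 h
  refine rankEq_iff.2 ⟨hγ, ⟨g ∘ a, generates_equiv_comp g ha⟩, fun b hb => ?_⟩
  have hb' : ctype (L := L) b = ctype (g.symm ∘ b) :=
    ctype_eq_of_tupleTheory_eq (tupleTheory_equiv_comp g.symm b).symm
  exact hb' ▸ hsupp _ (generates_equiv_comp g.symm hb)

/-- The class of rank `γ'` omits the complete type of every generating tuple of `M`. -/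
theorem not_rankEq_of_lt (h : RankEq T n γ M) (hlt : γ < γ') : ¬ RankEq T n γ' M := by
  intro h'
  obtain ⟨-, ⟨a, ha⟩, hsupp⟩ := rankEq_iff.1 h'
  obtain ⟨φ, ⟨P, hP, v, hφ⟩, hforce⟩ := hsupp a ha
  exact hP.2 γ hlt M h a ha ⟨v, hforce P hP v hφ⟩

theorem RankEq.eq (h : RankEq T n γ M) (h' : RankEq T n γ' M) : γ = γ' := by
  rcases lt_trichotomy γ γ' with hlt | heq | hgt
  · exact absurd h' (not_rankEq_of_lt h hlt)
  · exact heq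
  · exact absurd h (not_rankEq_of_lt h' hgt)

theorem exists_rankEq_lt (hα : alphaCard L T n ≤ ℵ₀) :
    ∃ lam : Ordinal.{0}, 1 ≤ lam ∧
      ∀ γ (N : Theory.ModelType.{0, 0, 0} T), RankEq T n γ N → γ < lam := by
  classical
  let rank : Quotient (isoSetoid (L := L) (T := T) (n := n)) → Ordinal.{0} := fun c =>
    if h : ∃ γ, RankEq T n γ c.out.1 then h.choose else 0
  have : Countable (Quotient (isoSetoid (L := L) (T := T) (n := n))) :=
    Cardinal.mk_le_aleph0_iff.1 hα
  refine ⟨(⨆ c, rank c) + 1, le_add_self, fun γ N hN => ?_⟩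
  let c : Quotient (isoSetoid (L := L) (T := T) (n := n)) := ⟦⟨N, hN.exists_generates⟩⟧
  have hc : RankEq T n γ c.out.1 := hN.of_equiv (Quotient.mk_out (s := isoSetoid) _).some.symm
  have hrank : rank c = γ := by
    have hex : ∃ γ, RankEq T n γ c.out.1 := ⟨γ, hc⟩
    simp only [rank, dif_pos hex]
    exact hex.choose_spec.eq hc
  exact Order.lt_add_one_iff.2 (hrank ▸ Ordinal.le_iSup rank c)

variable (n) in
def generatedPairs (C : Set (Theory.ModelType.{0, 0, 0} T)) :
    Set (Σ M : Theory.ModelType.{0, 0, 0} T, Fin n → M) :=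
  {P | Generates L P.2 ∧ P.1 ∈ C}

theorem kclass_eq_generatedPairs :
    Kclass T n lam = generatedPairs n {N | ∀ β < lam, ¬ RankEq T n β N} := by
  ext P
  rw [Kclass, Set.mem_ofPred_eq, realizesNType_pType_iff, not_not]
  refine and_congr_right fun hP => ⟨fun h β hβ hr => h β hβ P.1 hr P.2 hP ?_, ?_⟩
  · exact (realizesNType_ctype_iff _ _).2 subset_rfl
  · rintro h β hβ N hN b hb hreal
    obtain ⟨g⟩ := nonempty_equiv_of_generates hb hP ((realizesNType_ctype_iff _ _).1 hreal)
    exact h β hβ (hN.of_equiv g)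

def IsSupported (K : Set (Σ M : Theory.ModelType.{0, 0, 0} T, Fin n → M))
    (S : Set (L.Formula (Fin n))) : Prop :=
  ∃ φ : L.Formula (Fin n), (∃ P ∈ K, φ.Realize P.2) ∧
    ∀ P ∈ K, φ.Realize P.2 → S ⊆ tupleTheory L P.2

theorem supported_ctype_iff {K : Set (Σ M : Theory.ModelType.{0, 0, 0} T, Fin n → M)}
    {M : Type*} [L.Structure M] (a : Fin n → M) :
    Supported K (ctype (L := L) a) ↔ IsSupported K (tupleTheory L a) := by
  have elim_zero {N : Type} (b : Fin n → N) (v : Fin 0 → N) :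
      Sum.elim b v = b ∘ Sum.elim id Fin.elim0 := by
    ext (i | i)
    · rfl
    · exact i.elim0
  constructor
  · rintro ⟨φ, ⟨P, hP, v, hφ⟩, hforce⟩
    change L.Formula (Fin n ⊕ Fin 0) at φ
    refine ⟨φ.relabel (Sum.elim id Fin.elim0), ⟨P, hP, ?_⟩, fun Q hQ hφQ ψ hψ => ?_⟩
    · rwa [Formula.realize_relabel, ← elim_zero]
    · rw [Formula.realize_relabel, ← elim_zero _ Fin.elim0] at hφQ
      exact (realize_relabel_inl ψ Q.2 Fin.elim0).1 (hforce Q hQ Fin.elim0 hφQ _ ⟨ψ, hψ, rfl⟩)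
  · rintro ⟨φ, ⟨P, hP, hφ⟩, hforce⟩
    refine ⟨φ.relabel Sum.inl, ⟨P, hP, Fin.elim0, (realize_relabel_inl φ P.2 _).2 hφ⟩, ?_⟩
    rintro Q hQ v hφQ _ ⟨ψ, hψ, rfl⟩
    exact (realize_relabel_inl ψ Q.2 v).2 (hforce Q hQ ((realize_relabel_inl φ Q.2 v).1 hφQ) hψ)

/-- Support passes between interdefinable generating tuples `q` and `a = t(q)`, `q = s(a)`:
if `φ` supports the theory of `q`, then `φ(s(x)) ∧ x = t(s(x))` supports that of `a`. -/
theorem IsSupported.of_generates {C : Set (Theory.ModelType.{0, 0, 0} T)} {Q : Type*}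
    [L.Structure Q] {q a : Fin n → Q} (hq : Generates L q) (ha : Generates L a)
    (h : IsSupported (generatedPairs n C) (tupleTheory L q)) :
    IsSupported (generatedPairs n C) (tupleTheory L a) := by
  obtain ⟨φ, ⟨P, ⟨hPgen, hPC⟩, hφP⟩, hforce⟩ := h
  choose t ht using fun i => hq (a i)
  choose s hs using fun i => ha (q i)
  have ha_t : a = fun i => (t i).realize q := funext fun i => (ht i).symm
  let ψ : L.Formula (Fin n) :=
    φ.subst s ⊓ Formula.iInf fun i => (Term.var i).equal ((t i).subst s)
  have hψ : ∀ (R : Type) [L.Structure R] (r : Fin n → R), ψ.Realize r ↔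
      φ.Realize (fun i => (s i).realize r) ∧ ∀ i, r i = (t i).realize fun j => (s j).realize r :=
    fun R _ r => by simp [ψ, Formula.realize_subst, Formula.realize_equal, Term.realize_subst]
  have hPs : (fun i => (s i).realize fun j => (t j).realize P.2) = P.2 := funext fun i => by
    have hqs : ((s i).subst t).realize q = (Term.var i : L.Term (Fin n)).realize q := by
      simp [Term.realize_subst, ht, hs]
    simpa [Term.realize_subst] using
      realize_eq_of_tupleTheory_subset (hforce P ⟨hPgen, hPC⟩ hφP) hqs
  refine ⟨ψ, ⟨⟨P.1, fun i => (t i).realize P.2⟩, ⟨?_, hPC⟩, ?_⟩, ?_⟩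
  · exact generates_of_realize_terms hPgen s (congrFun hPs)
  · exact (hψ P.1 _).2 ⟨by rwa [hPs], fun i => by rw [hPs]⟩
  · rintro R ⟨hrgen, hRC⟩ hψr
    obtain ⟨hφr, hr⟩ := (hψ R.1 R.2).1 hψr
    have hr' : (fun i => (t i).realize fun j => (s j).realize R.2) = R.2 :=
      funext fun i => (hr i).symm
    have hsub := hforce ⟨R.1, fun j => (s j).realize R.2⟩
      ⟨generates_of_realize_terms hrgen t (congrFun hr'), hRC⟩ hφr
    rw [ha_t, tupleTheory_realize_terms, ← hr', tupleTheory_realize_terms]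
    exact Set.preimage_mono hsub

theorem not_isSupported_kclass (hlam : 1 ≤ lam)
    (hbound : ∀ γ (N : Theory.ModelType.{0, 0, 0} T), RankEq T n γ N → γ < lam)
    {Q : Theory.ModelType.{0, 0, 0} T} {q : Fin n → Q} (hq : Generates L q) :
    ¬ IsSupported (Kclass T n lam) (tupleTheory L q) := by
  intro h
  by_cases hQ : ∃ γ, RankEq T n γ Q
  · obtain ⟨γ, hγ⟩ := hQ
    rw [kclass_eq_generatedPairs] at h
    obtain ⟨φ, ⟨P, ⟨hP, hPC⟩, hφ⟩, hforce⟩ := h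
    obtain ⟨g⟩ := nonempty_equiv_of_generates hq hP (hforce P ⟨hP, hPC⟩ hφ)
    exact hPC γ (hbound γ Q hγ) (hγ.of_equiv g)
  · have hlamQ : ¬ RankEq T n lam Q := fun h => hQ ⟨lam, h⟩
    simp only [rankEq_iff, hlam, true_and, not_and, not_forall] at hlamQ
    obtain ⟨a, ha, hna⟩ := hlamQ ⟨q, hq⟩
    rw [supported_ctype_iff, kclass_eq_generatedPairs] at hna
    rw [kclass_eq_generatedPairs] at h
    exact hna (h.of_generates hq ha)

end Rank

variable (T n) in
def generatedTheories : Set (Set (L.Formula (Fin n))) :=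
  {S | ∃ (Q : Theory.ModelType.{0, 0, 0} T) (q : Fin n → Q), Generates L q ∧ tupleTheory L q = S}

theorem countable_of_generates [Countable L.Symbols] {M : Type*} [L.Structure M]
    {a : Fin n → M} (ha : Generates L a) : Countable M :=
  Function.Surjective.countable (f := fun t : L.Term (Fin n) => t.realize a) ha

theorem countable_generatedTheories [Countable L.Symbols] (hα : alphaCard L T n ≤ ℵ₀) :
    (generatedTheories T n).Countable := by
  have : Countable (Quotient (isoSetoid (L := L) (T := T) (n := n))) :=
    Cardinal.mk_le_aleph0_iff.1 hα
  have (c : Quotient (isoSetoid (L := L) (T := T) (n := n))) : Countable c.out.1 :=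
    countable_of_generates c.out.2.choose_spec
  refine (Set.countable_range fun x : Σ c : Quotient (isoSetoid (L := L) (T := T) (n := n)),
    Fin n → c.out.1 => tupleTheory L x.2).mono ?_
  rintro _ ⟨Q, q, hq, rfl⟩
  obtain ⟨g⟩ := Quotient.mk_out (s := isoSetoid) (⟨Q, q, hq⟩ : NGenModel L T n)
  exact ⟨⟨_, g.symm ∘ q⟩, tupleTheory_equiv_comp g.symm q⟩

theorem exists_model_realize_of_directed {α ι : Type} [Nonempty ι] {Φ : ι → Set (L.Formula α)}
    (hΦ : Directed (· ⊆ ·) Φ)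
    (h : ∀ i, ∃ (M : Theory.ModelType.{0, 0, 0} T) (v : α → M), ∀ φ ∈ Φ i, φ.Realize v) :
    ∃ (M : Theory.ModelType.{0, 0, 0} T) (v : α → M), ∀ i, ∀ φ ∈ Φ i, φ.Realize v := by
  let U : ι → L[[α]].Theory := fun i =>
    (L.lhomWithConstants α).onTheory T ∪ Formula.equivSentence '' Φ i
  have hU : Directed (· ⊆ ·) U := fun i j => by
    obtain ⟨k, hik, hjk⟩ := hΦ i j
    exact ⟨k, Set.union_subset_union_right _ (Set.image_mono hik),
      Set.union_subset_union_right _ (Set.image_mono hjk)⟩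
  obtain ⟨M⟩ := (Theory.isSatisfiable_directed_union_iff hU).2 fun i => by
    obtain ⟨M, v, hv⟩ := h i
    let := constantsOn.structure v
    have : M ⊨ U i := (Theory.model_iff _).2 fun σ hσ => by
      obtain ⟨σ, hσ, rfl⟩ | ⟨φ, hφ, rfl⟩ := hσ
      · simpa using Theory.realize_sentence_of_mem T hσ
      · exact (Formula.realize_equivSentence M φ).2 (hv φ hφ)
    exact Theory.Model.isSatisfiable M
  let := (L.lhomWithConstants α).reduct M
  have := LHom.isExpansionOn_reduct (L.lhomWithConstants α) M
  have : M ⊨ T := (LHom.onTheory_model (L.lhomWithConstants α) T).1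
    (M.is_model.mono (Set.subset_union_left.trans (Set.subset_iUnion U (Classical.arbitrary ι))))
  refine ⟨Theory.ModelType.of T M, fun a => (L.con a : M), fun i φ hφ => ?_⟩
  have : M ⊨ Formula.equivSentence φ :=
    Theory.realize_sentence_of_mem (⋃ i, U i) (Set.mem_iUnion.2 ⟨i, Or.inr ⟨φ, hφ, rfl⟩⟩)
  exact (Formula.realize_equivSentence M φ).1 this

theorem exists_generates_tupleTheory_eq {M : Theory.ModelType.{0, 0, 0} T} {a : Fin n → M}
    (ha : HasTermWitnesses L a) :
    ∃ (E : Theory.ModelType.{0, 0, 0} T) (e : Fin n → E),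
      Generates L e ∧ tupleTheory L e = tupleTheory L a := by
  let S : L.ElementarySubstructure M := ⟨_, isElementary_closure_range ha⟩
  let e : Fin n → S := fun i => ⟨a i, Substructure.subset_closure (Set.mem_range_self i)⟩
  refine ⟨Theory.ModelType.of T S, e, fun y => ?_,
    Set.ext fun ψ => (S.subtype.map_formula ψ e).symm⟩
  obtain ⟨t, ht⟩ := mem_closure_range_iff.1 y.2
  exact ⟨t, Subtype.ext ((HomClass.realize_term S.subtype).symm.trans ht)⟩

variable {K : Set (Σ M : Theory.ModelType.{0, 0, 0} T, Fin n → M)}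

def RealizedIn (K : Set (Σ M : Theory.ModelType.{0, 0, 0} T, Fin n → M))
    (s : Finset (L.Formula (Fin n))) : Prop :=
  ∃ P ∈ K, ∀ ψ ∈ s, ψ.Realize P.2

theorem RealizedIn.exists_insert_witness [DecidableEq (L.Formula (Fin n))]
    (hK : ∀ P ∈ K, Generates L P.2) {s : Finset (L.Formula (Fin n))} (hs : RealizedIn K s)
    (χ : L.Formula (Fin n ⊕ Fin 1)) :
    ∃ x, RealizedIn K (insert x s) ∧ (x = (χ.iExs (Fin 1)).not ∨
      ∃ u : Fin 1 → L.Term (Fin n), x = χ.subst (Sum.elim Term.var u)) := by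
  obtain ⟨P, hP, hsP⟩ := hs
  by_cases hχ : ∃ y : Fin 1 → P.1, χ.Realize (Sum.elim P.2 y)
  · obtain ⟨y, hy⟩ := hχ
    obtain ⟨t, ht⟩ := hK P hP (y 0)
    refine ⟨_, ⟨P, hP, (Finset.forall_mem_insert _ _ _).2 ⟨?_, hsP⟩⟩, Or.inr ⟨fun _ => t, rfl⟩⟩
    rw [realize_subst_sum_elim_var]
    convert hy using 3 with j
    rw [Subsingleton.elim j 0, ht]
  · refine ⟨_, ⟨P, hP, (Finset.forall_mem_insert _ _ _).2 ⟨?_, hsP⟩⟩, Or.inl rfl⟩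
    rwa [Formula.realize_not, Formula.realize_iExs]

theorem RealizedIn.exists_insert_not [DecidableEq (L.Formula (Fin n))]
    {S : Set (L.Formula (Fin n))} (hS : ¬ IsSupported K S) {s : Finset (L.Formula (Fin n))}
    (hs : RealizedIn K s) : ∃ x, RealizedIn K (insert x s) ∧ ∃ ψ ∈ S, x = ψ.not := by
  by_contra! hno
  refine hS ⟨Formula.iInf fun ψ : s => ψ.1, ?_, fun P hP hφ ψ hψ => ?_⟩
  · obtain ⟨P, hP, hsP⟩ := hs
    exact ⟨P, hP, Formula.realize_iInf.2 fun ψ => hsP ψ ψ.2⟩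
  · by_contra hψP
    refine hno ψ.not ⟨P, hP, (Finset.forall_mem_insert _ _ _).2 ⟨hψP, fun χ hχ => ?_⟩⟩ ψ hψ rfl
    exact Formula.realize_iInf.1 hφ ⟨χ, hχ⟩

/-- Build `x₀, x₁, …`, each finite part realized in `K`, meeting in turn every requirement
"`χ` has a term witness" and "some formula of `S ∈ 𝒟` fails"; in a model of all `xₖ` the
constants then generate an elementary substructure omitting each `S ∈ 𝒟`. -/
theorem exists_generates_forall_not_subset [Countable L.Symbols]
    (hK : ∀ P ∈ K, Generates L P.2) (hKne : K.Nonempty)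
    {𝒟 : Set (Set (L.Formula (Fin n)))} (h𝒟 : 𝒟.Countable)
    (hns : ∀ S ∈ 𝒟, ¬ IsSupported K S) :
    ∃ (E : Theory.ModelType.{0, 0, 0} T) (e : Fin n → E),
      Generates L e ∧ ∀ S ∈ 𝒟, ¬ S ⊆ tupleTheory L e := by
  classical
  have := h𝒟.to_subtype
  obtain ⟨req, hreq⟩ := exists_surjective_nat (L.Formula (Fin n ⊕ Fin 1) ⊕ 𝒟)
  let Spec (k : ℕ) (x : L.Formula (Fin n)) : Prop := (req k).elim
    (fun χ => x = (χ.iExs (Fin 1)).not ∨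
      ∃ u : Fin 1 → L.Term (Fin n), x = χ.subst (Sum.elim Term.var u))
    (fun S => ∃ ψ ∈ S.1, x = ψ.not)
  have hstep (k : ℕ) (s) (hs : RealizedIn K s) : ∃ x, RealizedIn K (insert x s) ∧ Spec k x := by
    rcases hk : req k with χ | S
    · simpa [Spec, hk] using hs.exists_insert_witness hK χ
    · simpa [Spec, hk] using hs.exists_insert_not (hns S.1 S.2)
  obtain ⟨x, hxSpec, hxK⟩ := exists_seq_of_forall_insert (RealizedIn K) Spec
    ⟨hKne.some, hKne.some_mem, by simp⟩ hstep
  obtain ⟨M, a, ha⟩ := exists_model_realize_of_directed (T := T)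
    (Φ := fun m => ((Finset.range m).image x : Set (L.Formula (Fin n))))
    (Monotone.directed_le fun _ _ h =>
      Finset.coe_subset.2 (Finset.image_subset_image (Finset.range_subset_range.2 h)))
    fun m => by obtain ⟨P, hP, hPm⟩ := hxK m; exact ⟨P.1, P.2, hPm⟩
  have hx (k : ℕ) : (x k).Realize a :=
    ha (k + 1) _ (Finset.mem_image_of_mem x (Finset.self_mem_range_succ k))
  have hwit : HasTermWitnesses L a := by
    rintro χ ⟨y, hy⟩
    obtain ⟨k, hk⟩ := hreq (Sum.inl χ)
    obtain hxk | ⟨u, hxk⟩ : _ ∨ _ := by simpa [Spec, hk] using hxSpec k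
    · exact absurd (Formula.realize_iExs.2 ⟨y, hy⟩)
        (hxk ▸ hx k : Formula.Realize (χ.iExs (Fin 1)).not a)
    · exact ⟨u, (realize_subst_sum_elim_var χ u a).1 (hxk ▸ hx k)⟩
  obtain ⟨E, e, he, hEe⟩ := exists_generates_tupleTheory_eq hwit
  refine ⟨E, e, he, fun S hS hSe => ?_⟩
  obtain ⟨k, hk⟩ := hreq (Sum.inr ⟨S, hS⟩)
  obtain ⟨ψ, hψS, hxk⟩ : ∃ ψ ∈ S, x k = ψ.not := by simpa [Spec, hk] using hxSpec k
  exact (hxk ▸ hx k : Formula.Realize ψ.not a) (hEe ▸ hSe hψS : ψ ∈ tupleTheory L a)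

end Paper

theorem stmt_5_general (L : FirstOrder.Language.{0, 0}) [Countable L.Symbols] (T : L.Theory)
    (n : ℕ)
    (hα : Paper.alphaCard L T n ≤ Cardinal.aleph0)
    (M : FirstOrder.Language.Theory.ModelType.{0, 0, 0} T)
    (hgen : ∃ a : Fin n → M, Paper.Generates L a) :
    ∃ γ : Ordinal, Paper.RankEq T n γ M := by
  by_contra! hM
  obtain ⟨lam, hlam, hbound⟩ := Paper.exists_rankEq_lt hα
  obtain ⟨a, ha⟩ := hgen
  have hKclass := Paper.kclass_eq_generatedPairs (T := T) (n := n) (lam := lam)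
  have hKgen (P) (hP : P ∈ Paper.Kclass T n lam) : Paper.Generates L P.2 := (hKclass ▸ hP).1
  have hMK : ⟨M, a⟩ ∈ Paper.Kclass T n lam := hKclass ▸ ⟨ha, fun β _ => hM β⟩
  obtain ⟨E, e, he, homit⟩ := Paper.exists_generates_forall_not_subset hKgen ⟨_, hMK⟩
    (Paper.countable_generatedTheories hα)
    fun _ ⟨Q, q, hq, hS⟩ => hS ▸ Paper.not_isSupported_kclass hlam hbound hq
  exact homit _ ⟨E, e, he, rfl⟩ subset_rfl

/-- If `T` is `n`-consistent with at most `ℵ₀` isomorphism classes of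
`n`-generated models, then every `n`-generated model of `T` has an ordinal rank. -/
theorem stmt_5 (L : FirstOrder.Language.{0, 0}) [Countable L.Symbols] (T : L.Theory)
    (n : ℕ) (hcons : Paper.NConsistent L T n)
    (hα : Paper.alphaCard L T n ≤ Cardinal.aleph0)
    (M : FirstOrder.Language.Theory.ModelType.{0, 0, 0} T)
    (hgen : ∃ a : Fin n → M, Paper.Generates L a) :
    ∃ γ : Ordinal, Paper.RankEq T n γ M :=
  stmt_5_general L T n hα M hgen
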